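/- Let φ = (1/4)(I⊗I + a X⊗X + b Y⊗Y + c Z⊗Z) with a,b,c ∈ [0,1]. If φ is positive semidefinite (a valid two-qubit state), then a + b + c ≤ 1, the partial transpose of φ is also positive semidefinite, and hence φ is separable. -/

import Mathlib

open Matrix Kronecker
open scoped ComplexOrder

noncomputable def pauliX : Matrix (Fin 2) (Fin 2) ℂ := !![0, 1; 1, 0]
noncomputable def pauliY : Matrix (Fin 2) (Fin 2) ℂ := !![0, -Complex.I; Complex.I, 0]
noncomputable def pauliZ : Matrix (Fin 2) (Fin 2) ℂ := !![1, 0; 0, -1]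

/-- Partial transpose on the second tensor factor of a two-qubit operator. -/
def ptransposeB (φ : Matrix (Fin 2 × Fin 2) (Fin 2 × Fin 2) ℂ) :
    Matrix (Fin 2 × Fin 2) (Fin 2 × Fin 2) ℂ :=
  fun p q => φ (p.1, q.2) (q.1, p.2)

/-- A two-qubit operator is separable if it is a finite nonnegative combination of
tensor products of positive semidefinite operators. -/
def Separable2 (φ : Matrix (Fin 2 × Fin 2) (Fin 2 × Fin 2) ℂ) : Prop :=
  ∃ (k : ℕ) (w : Fin k → ℝ) (M N : Fin k → Matrix (Fin 2) (Fin 2) ℂ),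
    (∀ i, 0 ≤ w i) ∧ (∀ i, (M i).PosSemidef) ∧ (∀ i, (N i).PosSemidef) ∧
    φ = ∑ i, (w i : ℂ) • (M i ⊗ₖ N i)

/-!
For a Hermitian involution `P`, `1 + P ⊗ P = ½ ((1 + P) ⊗ (1 + P) + (1 - P) ⊗ (1 - P))` is a
sum of products of positive operators. Hence
`φ = (1 - a - b - c)/4 · 1 + a/4 (1 + X ⊗ X) + b/4 (1 + Y ⊗ Y) + c/4 (1 + Z ⊗ Z)`
is separable as soon as `a + b + c ≤ 1`, and that inequality is forced by positivity of `φ` on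
the singlet, where its expectation is `(1 - a - b - c)/2`. Partial transposition sends `M ⊗ N` to
`M ⊗ Nᵀ`, so it keeps every separable operator positive semidefinite.
-/

lemma Matrix.IsHermitian.posSemidef_one_add_of_mul_self_eq_one {𝕜 n : Type*} [RCLike 𝕜]
    [Fintype n] [DecidableEq n] {P : Matrix n n 𝕜} (hP : P.IsHermitian) (hPP : P * P = 1) :
    (1 + P).PosSemidef := by
  have hsq : (1 + P)ᴴ * (1 + P) = (2 : ℝ) • (1 + P) := by
    rw [conjTranspose_add, conjTranspose_one, hP.eq, two_smul]
    noncomm_ring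
    rw [hPP]
    abel
  have h := (posSemidef_conjTranspose_mul_self (1 + P)).smul (a := (1 / 2 : ℝ)) (by norm_num)
  rwa [hsq, smul_smul, one_div, inv_mul_cancel₀ two_ne_zero, one_smul] at h

lemma Matrix.two_smul_one_add_kronecker_self {R m : Type*} [CommRing R] [DecidableEq m]
    (P : Matrix m m R) :
    (2 : R) • (1 + P ⊗ₖ P) = (1 + P) ⊗ₖ (1 + P) + (1 - P) ⊗ₖ (1 - P) := by
  rw [← one_kronecker_one]
  ext ⟨i, k⟩ ⟨j, l⟩
  simp only [smul_apply, add_apply, sub_apply, kronecker_apply, smul_eq_mul]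
  ring

lemma ptransposeB_kronecker (M N : Matrix (Fin 2) (Fin 2) ℂ) :
    ptransposeB (M ⊗ₖ N) = M ⊗ₖ Nᵀ := rfl

lemma ptransposeB_sum {ι : Type*} (s : Finset ι)
    (φ : ι → Matrix (Fin 2 × Fin 2) (Fin 2 × Fin 2) ℂ) :
    ptransposeB (∑ i ∈ s, φ i) = ∑ i ∈ s, ptransposeB (φ i) := by
  ext p q
  simp [ptransposeB, Matrix.sum_apply]

lemma ptransposeB_smul (r : ℂ) (φ : Matrix (Fin 2 × Fin 2) (Fin 2 × Fin 2) ℂ) :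
    ptransposeB (r • φ) = r • ptransposeB φ := rfl

namespace Separable2

lemma kronecker {M N : Matrix (Fin 2) (Fin 2) ℂ} (hM : M.PosSemidef) (hN : N.PosSemidef) :
    Separable2 (M ⊗ₖ N) :=
  ⟨1, fun _ => 1, fun _ => M, fun _ => N, fun _ => zero_le_one, fun _ => hM, fun _ => hN,
    by simp⟩

lemma add {φ ψ : Matrix (Fin 2 × Fin 2) (Fin 2 × Fin 2) ℂ} (hφ : Separable2 φ)
    (hψ : Separable2 ψ) : Separable2 (φ + ψ) := by
  obtain ⟨k, w, M, N, hw, hM, hN, rfl⟩ := hφ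
  obtain ⟨l, v, M', N', hv, hM', hN', rfl⟩ := hψ
  refine ⟨k + l, Fin.append w v, Fin.append M M', Fin.append N N',
    Fin.addCases (by simpa) (by simpa), Fin.addCases (by simpa) (by simpa),
    Fin.addCases (by simpa) (by simpa), by simp [Fin.sum_univ_add]⟩

lemma smul {φ : Matrix (Fin 2 × Fin 2) (Fin 2 × Fin 2) ℂ} (hφ : Separable2 φ) {r : ℝ}
    (hr : 0 ≤ r) : Separable2 ((r : ℂ) • φ) := by
  obtain ⟨k, w, M, N, hw, hM, hN, rfl⟩ := hφ
  exact ⟨k, r • w, M, N, fun i => mul_nonneg hr (hw i), hM, hN, by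
    simp only [Finset.smul_sum, smul_smul, Pi.smul_apply, smul_eq_mul, Complex.ofReal_mul]⟩

lemma ptransposeB_posSemidef {φ : Matrix (Fin 2 × Fin 2) (Fin 2 × Fin 2) ℂ}
    (hφ : Separable2 φ) : (ptransposeB φ).PosSemidef := by
  obtain ⟨k, w, M, N, hw, hM, hN, rfl⟩ := hφ
  simp only [ptransposeB_sum, ptransposeB_smul, ptransposeB_kronecker]
  exact posSemidef_sum _ fun i _ =>
    ((hM i).kronecker (hN i).transpose).smul (Complex.zero_le_real.mpr (hw i))

lemma one_add_kronecker_self {P : Matrix (Fin 2) (Fin 2) ℂ} (hP : P.IsHermitian)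
    (hPP : P * P = 1) : Separable2 (1 + P ⊗ₖ P) := by
  have hplus := hP.posSemidef_one_add_of_mul_self_eq_one hPP
  have hminus : (1 - P).PosSemidef := sub_eq_add_neg (1 : Matrix _ _ ℂ) P ▸
    hP.neg.posSemidef_one_add_of_mul_self_eq_one (by rwa [neg_mul_neg])
  convert ((kronecker hplus hplus).add (kronecker hminus hminus)).smul
    (r := 1 / 2) (by norm_num) using 1
  rw [← two_smul_one_add_kronecker_self, smul_smul]
  norm_num

lemma one : Separable2 1 := by
  simpa using kronecker (M := 1) (N := 1) .one .one

end Separable2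

lemma pauliX_isHermitian : pauliX.IsHermitian := by
  ext i j; fin_cases i <;> fin_cases j <;> simp [pauliX]

lemma pauliY_isHermitian : pauliY.IsHermitian := by
  ext i j; fin_cases i <;> fin_cases j <;> simp [pauliY]

lemma pauliZ_isHermitian : pauliZ.IsHermitian := by
  ext i j; fin_cases i <;> fin_cases j <;> simp [pauliZ]

lemma pauliX_mul_self : pauliX * pauliX = 1 := by
  simp [pauliX, one_fin_two]

lemma pauliY_mul_self : pauliY * pauliY = 1 := by
  simp [pauliY, one_fin_two]

lemma pauliZ_mul_self : pauliZ * pauliZ = 1 := by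
  simp [pauliZ, one_fin_two]

noncomputable def bellDiagonal (a b c : ℝ) : Matrix (Fin 2 × Fin 2) (Fin 2 × Fin 2) ℂ :=
  (1 / 4 : ℂ) • (1 + (a : ℂ) • (pauliX ⊗ₖ pauliX) + (b : ℂ) • (pauliY ⊗ₖ pauliY)
    + (c : ℂ) • (pauliZ ⊗ₖ pauliZ))

-- the singlet `|01⟩ - |10⟩`, with amplitudes indexed by the pair of qubit values
def singlet : Fin 2 × Fin 2 → ℂ := fun p => !![0, 1; -1, 0] p.1 p.2

lemma singlet_dotProduct_bellDiagonal_mulVec (a b c : ℝ) :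
    star singlet ⬝ᵥ (bellDiagonal a b c *ᵥ singlet) = ((1 - a - b - c) / 2 : ℝ) := by
  simp only [bellDiagonal, singlet, pauliX, pauliY, pauliZ, dotProduct, mulVec,
    Fintype.sum_prod_type, Fin.sum_univ_two, Matrix.smul_apply, Matrix.add_apply, one_apply,
    kroneckerMap_apply, of_apply, cons_val', cons_val_zero, cons_val_one, cons_val_fin_one,
    Pi.star_apply]
  norm_num
  ring

lemma add_le_one_of_posSemidef_bellDiagonal {a b c : ℝ}
    (h : (bellDiagonal a b c).PosSemidef) :
    a + b + c ≤ 1 := by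
  have := h.dotProduct_mulVec_nonneg singlet
  rw [singlet_dotProduct_bellDiagonal_mulVec, Complex.zero_le_real] at this
  linarith

lemma bellDiagonal_eq (a b c : ℝ) : bellDiagonal a b c =
    (((1 - a - b - c) / 4 : ℝ) : ℂ) • 1 + ((a / 4 : ℝ) : ℂ) • (1 + pauliX ⊗ₖ pauliX)
      + ((b / 4 : ℝ) : ℂ) • (1 + pauliY ⊗ₖ pauliY)
      + ((c / 4 : ℝ) : ℂ) • (1 + pauliZ ⊗ₖ pauliZ) := by
  rw [bellDiagonal]
  push_cast
  module

lemma separable2_bellDiagonal {a b c : ℝ} (ha : 0 ≤ a) (hb : 0 ≤ b) (hc : 0 ≤ c)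
    (habc : a + b + c ≤ 1) : Separable2 (bellDiagonal a b c) := by
  rw [bellDiagonal_eq]
  refine (((Separable2.one.smul ?_).add
    ((Separable2.one_add_kronecker_self pauliX_isHermitian pauliX_mul_self).smul ?_)).add
    ((Separable2.one_add_kronecker_self pauliY_isHermitian pauliY_mul_self).smul ?_)).add
    ((Separable2.one_add_kronecker_self pauliZ_isHermitian pauliZ_mul_self).smul ?_) <;>
  linarith

theorem stmt10 (a b c : ℝ) (ha : 0 ≤ a) (hb : 0 ≤ b)
    (hc : 0 ≤ c)
    (φ : Matrix (Fin 2 × Fin 2) (Fin 2 × Fin 2) ℂ)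
    (hφ : φ = (1 / 4 : ℂ) •
      ((1 : Matrix (Fin 2 × Fin 2) (Fin 2 × Fin 2) ℂ)
        + (a : ℂ) • (pauliX ⊗ₖ pauliX) + (b : ℂ) • (pauliY ⊗ₖ pauliY)
        + (c : ℂ) • (pauliZ ⊗ₖ pauliZ)))
    (hpsd : φ.PosSemidef) :
    a + b + c ≤ 1 ∧ (ptransposeB φ).PosSemidef ∧ Separable2 φ := by
  change φ = bellDiagonal a b c at hφ
  subst hφ
  have habc := add_le_one_of_posSemidef_bellDiagonal hpsd
  have hsep := separable2_bellDiagonal ha hb hc habc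
  exact ⟨habc, hsep.ptransposeB_posSemidef, hsep⟩
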